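/- arXiv:2106.09524 — 6 statements merged into one kernel-verified Lean document; each statement's English description precedes it below -/
import Mathlib

section
/- Let A, B > 0 be real numbers with A/B + ln(B) ≥ 2, and let x > 0 satisfy x ≤ A + B·ln(x). Then x ≤ (5/2)·(A + B·ln(B)). -/
theorem stmt_0 (A B x : ℝ) (hA : 0 < A) (hB : 0 < B)
    (hcond : A / B + Real.log B ≥ 2) (hx : 0 < x)
    (hxle : x ≤ A + B * Real.log x) :
    x ≤ (5 / 2) * (A + B * Real.log B) := by
  have epos : (0:ℝ) < Real.exp 1 := Real.exp_pos 1
  have he : (5/3:ℝ) ≤ Real.exp 1 := by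
    have := Real.exp_one_gt_d9; linarith
  have h1 : Real.log (x / (B * Real.exp 1)) ≤ x / (B * Real.exp 1) - 1 :=
    Real.log_le_sub_one_of_pos (by positivity)
  have h2 : Real.log (x / (B * Real.exp 1)) = Real.log x - Real.log B - 1 := by
    rw [Real.log_div (ne_of_gt hx) (by positivity), Real.log_mul (ne_of_gt hB)
      (ne_of_gt epos), Real.log_exp]
    ring
  have h3 : Real.log x - Real.log B ≤ x / (B * Real.exp 1) := by
    rw [h2] at h1; linarith
  have h4 : B * Real.log x ≤ B * Real.log B + x / Real.exp 1 := by
    have hBe : 0 < B * Real.exp 1 := by positivity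
    have := mul_le_mul_of_nonneg_left h3 hB.le
    have heq : B * (x / (B * Real.exp 1)) = x / Real.exp 1 := by
      field_simp
    nlinarith
  have h5 : x ≤ A + B * Real.log B + x / Real.exp 1 := by linarith
  have h6 : x / Real.exp 1 ≤ (3/5) * x := by
    rw [div_le_iff₀ epos]
    nlinarith
  linarith
end

section
/- Let α ∈ (0,∞)^d and R ≥ 0. Then the hyperbolic entropy φ_α is μ-strongly convex (with respect to the Euclidean norm) on the closed Euclidean ball {β ∈ ℝ^d : ‖β‖₂ ≤ R}, with μ = 1/(4·√(R² + 4·max_i α_i⁴)); that is, for all β, β' in this ball and all t ∈ [0,1], φ_α(tβ + (1−t)β') ≤ t·φ_α(β) + (1−t)·φ_α(β') − (μ/2)·t(1−t)·‖β − β'‖₂². -/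
/-- The hyperbolic entropy with parameter `α ∈ (0,∞)^d`. -/
noncomputable def phiEnt {d : ℕ} (α β : Fin d → ℝ) : ℝ :=
  (1 / 4) * ∑ i, (β i * Real.arsinh (β i / (2 * α i ^ 2)) - Real.sqrt (β i ^ 2 + 4 * α i ^ 4))

/-! Writing `b = 2 α_i²`, the `i`-th term `(x * arsinh (x / b) - √(x² + b²)) / 4` of `φ_α` has
second derivative `1 / (4 √(x² + b²))`, which is at least `μ` for `|x| ≤ R`; so each term is
`μ`-strongly convex on `[-R, R]`. Since `‖β‖² = ∑ β_i²` and the ball of radius `R` projects into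
`[-R, R]`, the coordinatewise sum of these terms is `μ`-strongly convex on the ball. -/

open Real Set Finset

theorem ConvexOn.sum {𝕜 E β ι : Type*} [Semiring 𝕜] [PartialOrder 𝕜] [AddCommMonoid E]
    [AddCommMonoid β] [PartialOrder β] [IsOrderedAddMonoid β] [SMul 𝕜 E] [Module 𝕜 β]
    {s : Set E} (hs : Convex 𝕜 s) {t : Finset ι} {f : ι → E → β}
    (hf : ∀ i ∈ t, ConvexOn 𝕜 s (f i)) : ConvexOn 𝕜 s fun x ↦ ∑ i ∈ t, f i x := by
  induction t using Finset.cons_induction with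
  | empty => simpa using convexOn_const (0 : β) hs
  | cons i t _ ih =>
    simp only [Finset.sum_cons]
    exact (hf i (mem_cons_self i t)).add (ih fun j hj ↦ hf j (mem_cons_of_mem hj))

theorem StrongConvexOn.euclideanSpace_sum {ι : Type*} [Fintype ι] {R m : ℝ} {g : ι → ℝ → ℝ}
    (hg : ∀ i, StrongConvexOn (Icc (-R) R) m (g i)) :
    StrongConvexOn (Metric.closedBall (0 : EuclideanSpace ℝ ι) R) m
      fun β ↦ ∑ i, g i (β i) := by
  have hcoord (i : ι) : Metric.closedBall (0 : EuclideanSpace ℝ ι) R ⊆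
      EuclideanSpace.proj (𝕜 := ℝ) i ⁻¹' Icc (-R) R := fun β hβ ↦
    abs_le.1 ((PiLp.norm_apply_le β i).trans (mem_closedBall_zero_iff.1 hβ))
  have hsum : ConvexOn ℝ (Metric.closedBall (0 : EuclideanSpace ℝ ι) R)
      fun β ↦ ∑ i, (g i (β i) - m / 2 * ‖β i‖ ^ 2) :=
    ConvexOn.sum (convex_closedBall _ _) fun i _ ↦
      ((strongConvexOn_iff_convex.1 (hg i)).comp_linearMap
        (EuclideanSpace.proj (𝕜 := ℝ) i).toLinearMap).subset (hcoord i) (convex_closedBall _ _)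
  rw [strongConvexOn_iff_convex]
  refine hsum.congr fun β _ ↦ ?_
  dsimp only
  rw [Finset.sum_sub_distrib, ← Finset.mul_sum, EuclideanSpace.norm_sq_eq]

theorem hasDerivAt_arsinh_div {b : ℝ} (hb : 0 < b) (x : ℝ) :
    HasDerivAt (fun x ↦ arsinh (x / b)) (√(x ^ 2 + b ^ 2))⁻¹ x := by
  have hsqrt : √(1 + (x / b) ^ 2) = √(x ^ 2 + b ^ 2) / b := by
    rw [show 1 + (x / b) ^ 2 = (x ^ 2 + b ^ 2) / b ^ 2 by field_simp; ring,
      sqrt_div (by positivity), sqrt_sq hb.le]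
  refine ((hasDerivAt_arsinh (x / b)).comp x ((hasDerivAt_id x).div_const b)).congr_deriv ?_
  rw [hsqrt]
  field_simp

theorem hasDerivAt_mul_arsinh_div_sub_sqrt {b : ℝ} (hb : 0 < b) (x : ℝ) :
    HasDerivAt (fun x ↦ x * arsinh (x / b) - √(x ^ 2 + b ^ 2)) (arsinh (x / b)) x := by
  have hpos : 0 < x ^ 2 + b ^ 2 := by positivity
  have hsq : HasDerivAt (fun x ↦ x ^ 2 + b ^ 2) (2 * x) x := by
    simpa using (hasDerivAt_pow 2 x).add_const (b ^ 2)
  refine (((hasDerivAt_id' x).mul (hasDerivAt_arsinh_div hb x)).sub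
    (hsq.sqrt hpos.ne')).congr_deriv ?_
  have : 0 < √(x ^ 2 + b ^ 2) := sqrt_pos.2 hpos
  field_simp
  ring

theorem strongConvexOn_mul_arsinh_div_sub_sqrt {b c R : ℝ} (hb : 0 < b) (hc : 0 ≤ c) :
    StrongConvexOn (Icc (-R) R) (c / √(R ^ 2 + b ^ 2))
      fun x ↦ c * (x * arsinh (x / b) - √(x ^ 2 + b ^ 2)) := by
  rw [strongConvexOn_iff_convex]
  simp only [Real.norm_eq_abs, sq_abs]
  have hf (x : ℝ) : HasDerivAt
      (fun x ↦ c * (x * arsinh (x / b) - √(x ^ 2 + b ^ 2)) - c / √(R ^ 2 + b ^ 2) / 2 * x ^ 2)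
      (c * arsinh (x / b) - c / √(R ^ 2 + b ^ 2) * x) x := by
    refine (((hasDerivAt_mul_arsinh_div_sub_sqrt hb x).const_mul c).sub
      ((hasDerivAt_pow 2 x).const_mul _)).congr_deriv ?_
    push_cast
    ring
  have hf' (x : ℝ) : HasDerivAt (fun x ↦ c * arsinh (x / b) - c / √(R ^ 2 + b ^ 2) * x)
      (c / √(x ^ 2 + b ^ 2) - c / √(R ^ 2 + b ^ 2)) x :=
    (((hasDerivAt_arsinh_div hb x).const_mul c).sub
      ((hasDerivAt_id x).const_mul _)).congr_deriv (by simp [div_eq_mul_inv])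
  refine convexOn_of_hasDerivWithinAt2_nonneg (convex_Icc _ _)
    (fun x _ ↦ (hf x).continuousAt.continuousWithinAt) (fun x _ ↦ (hf x).hasDerivWithinAt)
    (fun x _ ↦ (hf' x).hasDerivWithinAt) fun x hx ↦ ?_
  rw [interior_Icc] at hx
  have hxR : x ^ 2 + b ^ 2 ≤ R ^ 2 + b ^ 2 := by nlinarith [hx.1, hx.2]
  exact sub_nonneg.2 <|
    div_le_div_of_nonneg_left hc (sqrt_pos.2 (by positivity)) (sqrt_le_sqrt hxR)

theorem phiEnt_eq_sum {d : ℕ} (α β : Fin d → ℝ) :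
    phiEnt α β =
      ∑ i, 1 / 4 * (β i * arsinh (β i / (2 * α i ^ 2)) - √(β i ^ 2 + (2 * α i ^ 2) ^ 2)) := by
  rw [phiEnt, Finset.mul_sum]
  congr! 5
  ring

theorem strongConvexOn_phiEnt {d : ℕ} {α : Fin d → ℝ} (hα : ∀ i, α i ≠ 0) (R : ℝ) :
    StrongConvexOn (Metric.closedBall (0 : EuclideanSpace ℝ (Fin d)) R)
      (1 / (4 * √(R ^ 2 + 4 * ⨆ i, α i ^ 4))) fun β ↦ phiEnt α β := by
  simp only [phiEnt_eq_sum]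
  refine StrongConvexOn.euclideanSpace_sum fun i ↦
    (strongConvexOn_mul_arsinh_div_sub_sqrt (by have := hα i; positivity) (by norm_num)).mono ?_
  have hαi : (2 * α i ^ 2) ^ 2 ≤ 4 * ⨆ i, α i ^ 4 := by
    have := le_ciSup (Set.finite_range fun i ↦ α i ^ 4).bddAbove i
    linarith
  have hαi_ne := hα i
  rw [div_div]
  gcongr

theorem stmt_6_general {d : ℕ} (α : Fin d → ℝ) (hα : ∀ i, 0 < α i)
    (R : ℝ) (μ : ℝ)
    (hμ : μ = 1 / (4 * Real.sqrt (R ^ 2 + 4 * ⨆ i, α i ^ 4))) :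
    ∀ β β' : EuclideanSpace ℝ (Fin d), ‖β‖ ≤ R → ‖β'‖ ≤ R →
      ∀ t ∈ Set.Icc (0 : ℝ) 1,
        phiEnt α (t • β + (1 - t) • β') ≤
          t * phiEnt α β + (1 - t) * phiEnt α β' -
            (μ / 2) * t * (1 - t) * ‖β - β'‖ ^ 2 := by
  intro β β' hβ hβ' t ht
  subst hμ
  have h := (strongConvexOn_phiEnt (fun i ↦ (hα i).ne') R).2 (mem_closedBall_zero_iff.2 hβ)
    (mem_closedBall_zero_iff.2 hβ') ht.1 (sub_nonneg.2 ht.2) (add_sub_cancel t 1)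
  simp only [smul_eq_mul, WithLp.ofLp_add, WithLp.ofLp_smul] at h
  linear_combination h

theorem stmt_6 {d : ℕ} (hd : 0 < d) (α : Fin d → ℝ) (hα : ∀ i, 0 < α i)
    (R : ℝ) (hR : 0 ≤ R) (μ : ℝ)
    (hμ : μ = 1 / (4 * Real.sqrt (R ^ 2 + 4 * ⨆ i, α i ^ 4))) :
    ∀ β β' : EuclideanSpace ℝ (Fin d), ‖β‖ ≤ R → ‖β'‖ ≤ R →
      ∀ t ∈ Set.Icc (0 : ℝ) 1,
        phiEnt α (t • β + (1 - t) • β') ≤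
          t * phiEnt α β + (1 - t) * phiEnt α β' -
            (μ / 2) * t * (1 - t) * ‖β - β'‖ ^ 2 :=
  stmt_6_general α hα R μ hμ
end

section
/- For every fixed β ∈ ℝ^d, the hyperbolic entropy with uniform parameter α·(1,…,1) satisfies lim_{α → 0⁺} φ_{α𝟏}(β) / ln(1/α) = (1/2)·‖β‖₁, where ‖β‖₁ = ∑_{i=1}^d |β_i|. -/
open Real Filter

lemma logInv_atTop : Tendsto (fun α : ℝ => Real.log (1 / α)) (nhdsWithin 0 (Set.Ioi 0)) atTop := by
  have h : Tendsto (fun α : ℝ => -Real.log α) (nhdsWithin 0 (Set.Ioi 0)) atTop :=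
    tendsto_neg_atBot_atTop.comp Real.tendsto_log_nhdsGT_zero
  simpa [Real.log_inv] using h

lemma arsinh_eq_aux (c α : ℝ) (hc : 0 < c) (hα : 0 < α) :
    Real.arsinh (c / (2 * α ^ 2)) =
      Real.log (c / 2 + Real.sqrt (α ^ 4 + c ^ 2 / 4)) + 2 * Real.log (1 / α) := by
  have hα2 : (0:ℝ) < α ^ 2 := by positivity
  have h1 : 1 + (c / (2 * α ^ 2)) ^ 2 = (α ^ 4 + c ^ 2 / 4) / (α ^ 2) ^ 2 := by
    field_simp; ring
  have hnum : (0:ℝ) ≤ α ^ 4 + c ^ 2 / 4 := by positivity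
  have h2 : Real.sqrt (1 + (c / (2 * α ^ 2)) ^ 2)
      = Real.sqrt (α ^ 4 + c ^ 2 / 4) / α ^ 2 := by
    rw [h1, Real.sqrt_div hnum, Real.sqrt_sq hα2.le]
  have hpos : (0:ℝ) < c / 2 + Real.sqrt (α ^ 4 + c ^ 2 / 4) := by positivity
  rw [Real.arsinh, h2]
  have h3 : c / (2 * α ^ 2) + Real.sqrt (α ^ 4 + c ^ 2 / 4) / α ^ 2
      = (c / 2 + Real.sqrt (α ^ 4 + c ^ 2 / 4)) / α ^ 2 := by
    field_simp
  rw [h3, Real.log_div hpos.ne' (by positivity), Real.log_pow, one_div, Real.log_inv]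
  push_cast
  ring

lemma part2 (b : ℝ) :
    Tendsto (fun α : ℝ => Real.sqrt (b ^ 2 + 4 * α ^ 4) / Real.log (1 / α))
      (nhdsWithin 0 (Set.Ioi 0)) (nhds 0) := by
  have hc : Tendsto (fun α : ℝ => Real.sqrt (b ^ 2 + 4 * α ^ 4)) (nhdsWithin 0 (Set.Ioi 0))
      (nhds (Real.sqrt (b ^ 2 + 4 * 0 ^ 4))) := by
    apply Tendsto.mono_left _ nhdsWithin_le_nhds
    exact (Continuous.tendsto (by fun_prop) 0)
  exact hc.div_atTop logInv_atTop

lemma part1 (b : ℝ) :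
    Tendsto (fun α : ℝ => b * Real.arsinh (b / (2 * α ^ 2)) / Real.log (1 / α))
      (nhdsWithin 0 (Set.Ioi 0)) (nhds (2 * |b|)) := by
  rcases eq_or_ne b 0 with rfl | hb
  · simpa using (tendsto_const_nhds :
      Tendsto (fun _ : ℝ => (0:ℝ)) (nhdsWithin 0 (Set.Ioi 0)) (nhds 0))
  · set c := |b| with hc
    have hcpos : 0 < c := abs_pos.mpr hb
    -- b * arsinh (b / t) = c * arsinh (c / t)
    have habs : ∀ α : ℝ, b * Real.arsinh (b / (2 * α ^ 2))
        = c * Real.arsinh (c / (2 * α ^ 2)) := by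
      intro α
      rcases abs_cases b with ⟨h1, _⟩ | ⟨h1, _⟩
      · rw [hc, h1]
      · rw [hc, h1]
        have : b / (2 * α ^ 2) = -(-b / (2 * α ^ 2)) := by ring
        rw [this, Real.arsinh_neg]
        ring
    -- limit of the auxiliary function
    have hnum : Tendsto (fun α : ℝ => c * Real.log (c / 2 + Real.sqrt (α ^ 4 + c ^ 2 / 4)))
        (nhdsWithin 0 (Set.Ioi 0))
        (nhds (c * Real.log (c / 2 + Real.sqrt ((0:ℝ) ^ 4 + c ^ 2 / 4)))) := by
      apply Tendsto.mono_left _ nhdsWithin_le_nhds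
      apply ContinuousAt.tendsto
      apply ContinuousAt.mul continuousAt_const
      apply ContinuousAt.comp (Real.continuousAt_log ?_) (by fun_prop)
      have : Real.sqrt ((0:ℝ) ^ 4 + c ^ 2 / 4) = Real.sqrt (c ^ 2 / 4) := by norm_num
      positivity
    have hG : Tendsto (fun α : ℝ =>
        c * Real.log (c / 2 + Real.sqrt (α ^ 4 + c ^ 2 / 4)) / Real.log (1 / α) + 2 * c)
        (nhdsWithin 0 (Set.Ioi 0)) (nhds (0 + 2 * c)) :=
      (hnum.div_atTop logInv_atTop).add tendsto_const_nhds
    have heq : ∀ᶠ α in nhdsWithin 0 (Set.Ioi 0),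
        c * Real.log (c / 2 + Real.sqrt (α ^ 4 + c ^ 2 / 4)) / Real.log (1 / α) + 2 * c
        = b * Real.arsinh (b / (2 * α ^ 2)) / Real.log (1 / α) := by
      filter_upwards [Ioo_mem_nhdsGT_of_mem (by norm_num : (0:ℝ) ∈ Set.Ico 0 1)] with α hα
      have hα0 : 0 < α := hα.1
      have hL : 0 < Real.log (1 / α) := by
        apply Real.log_pos
        rw [lt_div_iff₀ hα0]; linarith [hα.2]
      rw [habs, arsinh_eq_aux c α hcpos hα0]
      field_simp
    have := hG.congr' heq
    simpa using this

lemma term_tendsto (b : ℝ) :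
    Tendsto (fun α : ℝ => (1 / 4) *
        (b * Real.arsinh (b / (2 * α ^ 2)) - Real.sqrt (b ^ 2 + 4 * α ^ 4)) / Real.log (1 / α))
      (nhdsWithin 0 (Set.Ioi 0)) (nhds (|b| / 2)) := by
  have h := (((part1 b).sub (part2 b)).const_mul (1 / 4 : ℝ))
  have heq : ∀ α : ℝ,
      (1 / 4 : ℝ) * (b * Real.arsinh (b / (2 * α ^ 2)) / Real.log (1 / α)
        - Real.sqrt (b ^ 2 + 4 * α ^ 4) / Real.log (1 / α))
      = (1 / 4) * (b * Real.arsinh (b / (2 * α ^ 2)) - Real.sqrt (b ^ 2 + 4 * α ^ 4))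
          / Real.log (1 / α) := by
    intro α; ring
  have h2 := h.congr heq
  convert h2 using 2
  ring

theorem stmt_8 {d : ℕ} (β : Fin d → ℝ) :
    Filter.Tendsto (fun α : ℝ => phiEnt (fun _ => α) β / Real.log (1 / α))
      (nhdsWithin 0 (Set.Ioi 0)) (nhds ((1 / 2) * ∑ i, |β i|)) := by
  have h := tendsto_finset_sum (Finset.univ : Finset (Fin d))
    (fun i _ => term_tendsto (β i))
  have heq : ∀ α : ℝ, (∑ i, (1 / 4 : ℝ) *
      (β i * Real.arsinh (β i / (2 * α ^ 2)) - Real.sqrt (β i ^ 2 + 4 * α ^ 4))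
        / Real.log (1 / α))
      = phiEnt (fun _ => α) β / Real.log (1 / α) := by
    intro α
    rw [phiEnt, Finset.mul_sum, Finset.sum_div]
  have h2 := h.congr heq
  have : (∑ i, |β i| / 2) = (1 / 2) * ∑ i, |β i| := by
    rw [Finset.mul_sum]
    exact Finset.sum_congr rfl fun i _ => by ring
  rwa [this] at h2
end

section
/- Let X ∈ ℝ^{n×d}, y ∈ ℝⁿ be such that there exists β* ∈ ℝ^d with Xβ* = y, and let L(β) = (1/(4n))·‖Xβ − y‖₂². Let Ψ : ℝ^d → ℝ be twice continuously differentiable and μ-strongly convex for some μ > 0. Let β : [0,∞) → ℝ^d be continuous with β(0) = β₀, such that t ↦ ∇Ψ(β(t)) is differentiable with derivative (d/dt)∇Ψ(β(t)) = −∇L(β(t)) for all t ≥ 0. Then there exists β_∞ ∈ ℝ^d such that β(t) → β_∞ as t → ∞, Xβ_∞ = y, and for every β ∈ ℝ^d with Xβ = y one has D_Ψ(β_∞, β₀) ≤ D_Ψ(β, β₀). -/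
open Set Filter Topology
open scoped RealInnerProductSpace

/-!
For an interpolant `b` (`X b = y`), the Bregman divergence `D_Ψ(b, β t)` is a Lyapunov function of
the mirror flow: by the three-point identity its derivative is `⟪∇L(β t), b - β t⟫ = -2 L(β t)`,
although only `∇Ψ ∘ β`, not `β`, is known to be differentiable. So it decreases, which keeps the
trajectory bounded by strong convexity, and `L(β t)` cannot stay away from `0`; by compactness the
trajectory has a cluster point `β∞` with `L(β∞) = 0`. The same argument with `b = β∞` gives
`D_Ψ(β∞, β t) → 0`, hence `β t → β∞`. Finally `∇Ψ(β t)` only moves along `∇L ∈ (ker X)ᗮ`, so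
`∇Ψ(β∞) - ∇Ψ(β₀) ⊥ ker X`, and the three-point identity gives
`D_Ψ(b, β₀) = D_Ψ(b, β∞) + D_Ψ(β∞, β₀) ≥ D_Ψ(β∞, β₀)` for every interpolant `b`.
-/

lemma hasDerivWithinAt_zero_of_nonneg_of_le {R S : ℝ → ℝ} {s : Set ℝ} {t : ℝ}
    (hS : HasDerivWithinAt S 0 s t) (hSt : S t = 0) (hR : ∀ u, 0 ≤ R u)
    (hRS : ∀ u, R u ≤ S u) :
    HasDerivWithinAt R 0 s t := by
  have hRt : R t = 0 := le_antisymm (hSt ▸ hRS t) (hR t)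
  rw [hasDerivWithinAt_iff_isLittleO] at hS ⊢
  simp only [hRt, hSt, smul_zero, sub_zero] at hS ⊢
  refine (Asymptotics.isBigO_of_le _ fun u => ?_).trans_isLittleO hS
  rw [Real.norm_of_nonneg (hR u), Real.norm_of_nonneg ((hR u).trans (hRS u))]
  exact hRS u

lemma antitoneOn_Ici_of_hasDerivWithinAt_nonpos {f f' : ℝ → ℝ} {a : ℝ}
    (hf : ∀ t ∈ Ici a, HasDerivWithinAt f (f' t) (Ici a) t)
    (hf' : ∀ t ∈ Ici a, f' t ≤ 0) :
    AntitoneOn f (Ici a) :=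
  antitoneOn_of_hasDerivWithinAt_nonpos (convex_Ici a)
    (fun t ht => (hf t ht).continuousWithinAt)
    (fun t ht => (hf t (interior_subset ht)).mono interior_subset)
    (fun t ht => hf' t (interior_subset ht))

lemma exists_lt_of_hasDerivWithinAt_add_nonpos {V V' g : ℝ → ℝ}
    (hV : ∀ t ∈ Ici 0, HasDerivWithinAt V (V' t) (Ici 0) t)
    (hV' : ∀ t ∈ Ici 0, V' t + g t ≤ 0)
    (hV0 : ∀ t ∈ Ici 0, 0 ≤ V t) {ε : ℝ} (hε : 0 < ε) : ∃ t ∈ Ici 0, g t < ε := by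
  by_contra! hg
  -- otherwise `V t + ε t` would be antitone, forcing `V` negative for large `t`
  have hanti : AntitoneOn (fun t => V t + ε * t) (Ici 0) :=
    antitoneOn_Ici_of_hasDerivWithinAt_nonpos (f' := fun t => V' t + ε)
      (fun t ht => (hV t ht).add (by simpa using (hasDerivWithinAt_id t (Ici 0)).const_mul ε))
      (fun t ht => by linarith [hV' t ht, hg t ht])
  have hT : (V 0 + 1) / ε ∈ Ici (0 : ℝ) := div_nonneg (by linarith [hV0 0 self_mem_Ici]) hε.le
  have := hanti self_mem_Ici hT hT
  simp only [mul_zero, add_zero, mul_div_cancel₀ _ hε.ne'] at this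
  linarith [hV0 _ hT]

lemma tendsto_zero_of_antitoneOn_Ici {V : ℝ → ℝ} (hV : AntitoneOn V (Ici 0))
    (hV0 : ∀ t ∈ Ici 0, 0 ≤ V t) (hsmall : ∀ ε > 0, ∃ t ∈ Ici 0, V t < ε) :
    Tendsto V atTop (𝓝 0) := by
  rw [Metric.tendsto_atTop]
  intro ε hε
  obtain ⟨T, hT, hVT⟩ := hsmall ε hε
  refine ⟨T, fun t ht => ?_⟩
  have ht0 : t ∈ Ici (0 : ℝ) := le_trans hT ht
  rw [Real.dist_0_eq_abs, abs_of_nonneg (hV0 t ht0)]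
  exact (hV hT ht0 ht).trans_lt hVT

lemma exists_mem_closure_eq_zero {X : Type*} [PseudoMetricSpace X] [ProperSpace X] {g : X → ℝ}
    {s : Set X} (hg : Continuous g) (hg0 : ∀ x, 0 ≤ g x) (hs : Bornology.IsBounded s)
    (hsmall : ∀ ε > 0, ∃ x ∈ s, g x < ε) : ∃ z ∈ closure s, g z = 0 := by
  obtain ⟨x₀, hx₀, -⟩ := hsmall 1 one_pos
  obtain ⟨z, hz, hmin⟩ := hs.isCompact_closure.exists_isMinOn ⟨x₀, subset_closure hx₀⟩
    hg.continuousOn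
  refine ⟨z, hz, le_antisymm (le_of_forall_pos_lt_add fun ε hε => ?_) (hg0 z)⟩
  obtain ⟨x, hx, hgx⟩ := hsmall ε hε
  simpa using (hmin (subset_closure hx)).trans_lt hgx

lemma inner_eq_of_hasDerivWithinAt_of_tendsto {E : Type*} [NormedAddCommGroup E]
    [InnerProductSpace ℝ E] {g g' : ℝ → E} {v w : E}
    (hg : ∀ t ∈ Ici 0, HasDerivWithinAt g (g' t) (Ici 0) t)
    (hv : ∀ t ∈ Ici 0, ⟪g' t, v⟫ = 0)
    (hlim : Tendsto g atTop (𝓝 w)) : ⟪w, v⟫ = ⟪g 0, v⟫ := by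
  have hderiv : ∀ t ∈ Ici 0, HasDerivWithinAt (fun u => ⟪g u, v⟫) 0 (Ici 0) t :=
    fun t ht => by simpa [hv t ht] using (hg t ht).inner ℝ (hasDerivWithinAt_const t _ v)
  have hanti := antitoneOn_Ici_of_hasDerivWithinAt_nonpos hderiv fun _ _ => le_rfl
  have hmono := antitoneOn_Ici_of_hasDerivWithinAt_nonpos (fun t ht => (hderiv t ht).neg)
    fun _ _ => neg_zero.le
  have hconst : ∀ᶠ t in atTop, ⟪g 0, v⟫ = ⟪g t, v⟫ :=
    eventually_ge_atTop 0 |>.mono fun t ht =>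
      le_antisymm (neg_le_neg_iff.1 (hmono self_mem_Ici ht ht)) (hanti self_mem_Ici ht ht)
  exact tendsto_nhds_unique (hlim.inner tendsto_const_nhds) (tendsto_const_nhds.congr' hconst)

section Bregman

variable {E : Type*} [NormedAddCommGroup E] [InnerProductSpace ℝ E] [CompleteSpace E]
  {f : E → ℝ} {μ : ℝ}

noncomputable def bregmanDiv (f : E → ℝ) (a x : E) : ℝ :=
  f a - f x - ⟪gradient f x, a - x⟫

@[simp]
lemma bregmanDiv_self (f : E → ℝ) (x : E) : bregmanDiv f x x = 0 := by
  simp [bregmanDiv]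

lemma bregmanDiv_add_bregmanDiv (f : E → ℝ) (a x : E) :
    bregmanDiv f a x + bregmanDiv f x a = ⟪gradient f a - gradient f x, a - x⟫ := by
  simp only [bregmanDiv, inner_sub_left, inner_sub_right]
  ring

lemma bregmanDiv_three_point (f : E → ℝ) (b z x : E) :
    bregmanDiv f b x =
      bregmanDiv f b z + ⟪gradient f x - gradient f z, z - b⟫ + bregmanDiv f z x := by
  simp only [bregmanDiv, inner_sub_left, inner_sub_right]
  ring

lemma ContDiff.continuous_gradient (hf : ContDiff ℝ 1 f) : Continuous (gradient f) :=
  (InnerProductSpace.toDual ℝ E).symm.continuous.comp (hf.continuous_fderiv one_ne_zero)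

lemma ContDiff.continuous_bregmanDiv (hf : ContDiff ℝ 1 f) (a : E) :
    Continuous (bregmanDiv f a) :=
  (continuous_const.sub hf.continuous).sub
    (hf.continuous_gradient.inner (continuous_const.sub continuous_id))

lemma ConvexOn.bregmanDiv_nonneg (hf : ConvexOn ℝ univ f) (hd : Differentiable ℝ f) (a x : E) :
    0 ≤ bregmanDiv f a x := by
  set φ : ℝ → ℝ := fun τ => f (AffineMap.lineMap x a τ)
  have hφ : ConvexOn ℝ univ φ := hf.comp_affineMap _
  have hφ' : HasDerivAt φ ⟪gradient f x, a - x⟫ 0 := by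
    rw [inner_gradient_left]
    exact (hd x).hasFDerivAt.comp_hasDerivAt_of_eq (0 : ℝ) AffineMap.hasDerivAt_lineMap
      (AffineMap.lineMap_apply_zero x a).symm
  have := hφ.le_slope_of_hasDerivAt (mem_univ 0) (mem_univ 1) one_pos hφ'
  simp only [slope_def_field, φ, AffineMap.lineMap_apply_zero, AffineMap.lineMap_apply_one,
    sub_zero, div_one] at this
  simp only [bregmanDiv]
  linarith

lemma StrongConvexOn.sq_norm_sub_le_bregmanDiv (hf : StrongConvexOn univ μ f)
    (hd : Differentiable ℝ f) (a x : E) : μ / 2 * ‖a - x‖ ^ 2 ≤ bregmanDiv f a x := by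
  set g : E → ℝ := fun b => f b - μ / 2 * ‖b‖ ^ 2
  have hg : ∀ b, HasFDerivAt g (fderiv ℝ f b - (μ / 2) • (2 • innerSL ℝ b)) b := fun b =>
    (hd b).hasFDerivAt.sub ((hasStrictFDerivAt_norm_sq b).hasFDerivAt.const_mul (μ / 2))
  have hgrad : ⟪gradient g x, a - x⟫ = ⟪gradient f x, a - x⟫ - μ * ⟪x, a - x⟫ := by
    rw [inner_gradient_left, inner_gradient_left, (hg x).fderiv]
    simp only [sub_apply, smul_apply, innerSL_apply_apply, smul_eq_mul, nsmul_eq_mul]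
    ring
  have := (strongConvexOn_iff_convex.1 hf).bregmanDiv_nonneg
    (fun b => (hg b).differentiableAt) a x
  simp only [bregmanDiv, hgrad, g] at this ⊢
  have hx : ⟪x, a - x⟫ = ⟪a, x⟫ - ‖x‖ ^ 2 := by
    rw [inner_sub_right, real_inner_self_eq_norm_sq, real_inner_comm]
  rw [hx] at this
  rw [norm_sub_sq_real]
  linarith

lemma StrongConvexOn.bregmanDiv_nonneg (hf : StrongConvexOn univ μ f) (hμ : 0 ≤ μ)
    (hd : Differentiable ℝ f) (a x : E) : 0 ≤ bregmanDiv f a x :=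
  (strongConvexOn_zero.1 (hf.mono hμ)).bregmanDiv_nonneg hd a x

lemma StrongConvexOn.bregmanDiv_le (hf : StrongConvexOn univ μ f) (hμ : 0 < μ)
    (hd : Differentiable ℝ f) (a x : E) :
    bregmanDiv f a x ≤ ‖gradient f a - gradient f x‖ ^ 2 / μ := by
  have hsum := bregmanDiv_add_bregmanDiv f a x
  have hax := hf.sq_norm_sub_le_bregmanDiv hd a x
  have hxa := hf.sq_norm_sub_le_bregmanDiv hd x a
  have hcs := real_inner_le_norm (gradient f a - gradient f x) (a - x)
  rw [norm_sub_rev x a] at hxa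
  rw [le_div_iff₀ hμ]
  nlinarith [norm_nonneg (a - x), norm_nonneg (gradient f a - gradient f x),
    sq_nonneg (‖gradient f a - gradient f x‖ - μ * ‖a - x‖)]

lemma StrongConvexOn.isBounded_setOf_bregmanDiv_le (hf : StrongConvexOn univ μ f) (hμ : 0 < μ)
    (hd : Differentiable ℝ f) (a : E) (C : ℝ) :
    Bornology.IsBounded {x | bregmanDiv f a x ≤ C} := by
  refine (Metric.isBounded_closedBall (x := a) (r := √(2 * C / μ))).subset fun x hx => ?_
  rw [Metric.mem_closedBall, dist_comm, dist_eq_norm, ← abs_norm]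
  refine Real.abs_le_sqrt ?_
  rw [le_div_iff₀ hμ]
  linarith [hf.sq_norm_sub_le_bregmanDiv hd a x, hx.out]

lemma StrongConvexOn.hasDerivWithinAt_bregmanDiv_comp (hf : StrongConvexOn univ μ f)
    (hμ : 0 < μ) (hd : Differentiable ℝ f) {γ : ℝ → E} {θ : E} {s : Set ℝ} {t : ℝ}
    (hγ : HasDerivWithinAt (fun u => gradient f (γ u)) θ s t) (b : E) :
    HasDerivWithinAt (fun u => bregmanDiv f b (γ u)) ⟪θ, γ t - b⟫ s t := by
  have hdiff : HasDerivWithinAt (fun u => gradient f (γ u) - gradient f (γ t)) θ s t :=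
    hγ.sub_const _
  have hlin : HasDerivWithinAt (fun u => ⟪gradient f (γ u) - gradient f (γ t), γ t - b⟫)
      ⟪θ, γ t - b⟫ s t := by
    simpa using hdiff.inner ℝ (hasDerivWithinAt_const t s (γ t - b))
  -- `bregmanDiv f (γ t) (γ u)` is `O(‖∇f (γ u) - ∇f (γ t)‖²)`, hence flat at `u = t`
  have hflat : HasDerivWithinAt (fun u => bregmanDiv f (γ t) (γ u)) 0 s t := by
    refine hasDerivWithinAt_zero_of_nonneg_of_le
      (S := fun u => ‖gradient f (γ u) - gradient f (γ t)‖ ^ 2 / μ) ?_ (by simp)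
      (fun u => hf.bregmanDiv_nonneg hμ.le hd _ _) ?_
    · simpa using (hdiff.norm_sq).div_const μ
    · intro u
      rw [norm_sub_rev]
      exact hf.bregmanDiv_le hμ hd _ _
  have := (hlin.const_add (bregmanDiv f b (γ t))).add hflat
  rw [add_zero] at this
  exact this.congr (fun u _ => bregmanDiv_three_point f b (γ t) (γ u))
    (bregmanDiv_three_point f b (γ t) (γ t))

lemma StrongConvexOn.tendsto_of_antitoneOn_bregmanDiv (hf : StrongConvexOn univ μ f) (hμ : 0 < μ)
    (hf₁ : ContDiff ℝ 1 f) {γ : ℝ → E} {z : E}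
    (hanti : AntitoneOn (fun t => bregmanDiv f z (γ t)) (Ici 0))
    (hz : z ∈ closure (γ '' Ici 0)) :
    Tendsto γ atTop (𝓝 z) := by
  have hd := hf₁.differentiable one_ne_zero
  have hV : Tendsto (fun t => bregmanDiv f z (γ t)) atTop (𝓝 0) := by
    refine tendsto_zero_of_antitoneOn_Ici hanti (fun t _ => hf.bregmanDiv_nonneg hμ.le hd _ _)
      fun ε hε => ?_
    have hnhds : {x | bregmanDiv f z x < ε} ∈ 𝓝 z :=
      (hf₁.continuous_bregmanDiv z).continuousAt.preimage_mem_nhds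
        (Iio_mem_nhds (by simpa using hε))
    obtain ⟨_, hx, t, ht, rfl⟩ := mem_closure_iff_nhds.1 hz _ hnhds
    exact ⟨t, ht, hx⟩
  rw [tendsto_iff_norm_sub_tendsto_zero]
  have hsqrt : Tendsto (fun t => √(2 * bregmanDiv f z (γ t) / μ)) atTop (𝓝 0) := by
    simpa using ((hV.const_mul 2).div_const μ).sqrt
  refine squeeze_zero (fun _ => norm_nonneg _) (fun t => ?_) hsqrt
  rw [norm_sub_rev, ← abs_norm]
  refine Real.abs_le_sqrt ?_
  rw [le_div_iff₀ hμ]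
  linarith [hf.sq_norm_sub_le_bregmanDiv hd z (γ t)]

end Bregman

section LeastSquares

variable {E F : Type*} [NormedAddCommGroup E] [InnerProductSpace ℝ E] [CompleteSpace E]
  [NormedAddCommGroup F] [InnerProductSpace ℝ F]

lemma inner_gradient_mul_norm_sub_sq (A : E →L[ℝ] F) (y : F) (c : ℝ) (x v : E) :
    ⟪gradient (fun b => c * ‖A b - y‖ ^ 2) x, v⟫ = 2 * c * ⟪A x - y, A v⟫ := by
  rw [inner_gradient_left, (((A.hasFDerivAt.sub_const y).norm_sq).const_mul c).fderiv]
  simp only [smul_apply, ContinuousLinearMap.comp_apply, innerSL_apply_apply, smul_eq_mul,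
    nsmul_eq_mul]
  ring

variable {A : E →L[ℝ] F} {y : F} {c : ℝ} {Ψ : E → ℝ} {μ : ℝ} {β : ℝ → E}

lemma hasDerivWithinAt_bregmanDiv_mirrorFlow (hconv : StrongConvexOn univ μ Ψ) (hμ : 0 < μ)
    (hd : Differentiable ℝ Ψ)
    (hflow : ∀ t ∈ Ici (0 : ℝ), HasDerivWithinAt (fun s => gradient Ψ (β s))
      (-gradient (fun b => c * ‖A b - y‖ ^ 2) (β t)) (Ici 0) t)
    {b : E} (hb : A b = y) (t : ℝ) (ht : t ∈ Ici 0) :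
    HasDerivWithinAt (fun s => bregmanDiv Ψ b (β s)) (-(2 * (c * ‖A (β t) - y‖ ^ 2)))
      (Ici 0) t := by
  convert hconv.hasDerivWithinAt_bregmanDiv_comp hμ hd (hflow t ht) b using 1
  rw [inner_neg_left, inner_gradient_mul_norm_sub_sq, map_sub, hb, real_inner_self_eq_norm_sq]
  ring

lemma antitoneOn_bregmanDiv_mirrorFlow (hc : 0 ≤ c) (hconv : StrongConvexOn univ μ Ψ)
    (hμ : 0 < μ) (hd : Differentiable ℝ Ψ)
    (hflow : ∀ t ∈ Ici (0 : ℝ), HasDerivWithinAt (fun s => gradient Ψ (β s))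
      (-gradient (fun b => c * ‖A b - y‖ ^ 2) (β t)) (Ici 0) t)
    {b : E} (hb : A b = y) : AntitoneOn (fun s => bregmanDiv Ψ b (β s)) (Ici 0) :=
  antitoneOn_Ici_of_hasDerivWithinAt_nonpos
    (hasDerivWithinAt_bregmanDiv_mirrorFlow hconv hμ hd hflow hb)
    fun t _ => by
      have : 0 ≤ c * ‖A (β t) - y‖ ^ 2 := by positivity
      linarith

lemma exists_mem_closure_mirrorFlow [FiniteDimensional ℝ E] (hc : 0 < c) (hy : ∃ b, A b = y)
    (hconv : StrongConvexOn univ μ Ψ) (hμ : 0 < μ) (hd : Differentiable ℝ Ψ)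
    (hflow : ∀ t ∈ Ici (0 : ℝ), HasDerivWithinAt (fun s => gradient Ψ (β s))
      (-gradient (fun b => c * ‖A b - y‖ ^ 2) (β t)) (Ici 0) t) :
    ∃ z ∈ closure (β '' Ici 0), A z = y := by
  obtain ⟨b, hb⟩ := hy
  have hL0 : ∀ x, 0 ≤ c * ‖A x - y‖ ^ 2 := fun x => by positivity
  have hsmall : ∀ ε > 0, ∃ x ∈ β '' Ici 0, c * ‖A x - y‖ ^ 2 < ε := fun ε hε => by
    obtain ⟨t, ht, hlt⟩ := exists_lt_of_hasDerivWithinAt_add_nonpos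
      (hasDerivWithinAt_bregmanDiv_mirrorFlow hconv hμ hd hflow hb)
      (g := fun t => c * ‖A (β t) - y‖ ^ 2) (fun t _ => by linarith [hL0 (β t)])
      (fun t _ => hconv.bregmanDiv_nonneg hμ.le hd _ _) hε
    exact ⟨β t, mem_image_of_mem β ht, hlt⟩
  have hbdd : Bornology.IsBounded (β '' Ici 0) :=
    (hconv.isBounded_setOf_bregmanDiv_le hμ hd b (bregmanDiv Ψ b (β 0))).subset <| by
      rintro _ ⟨t, ht, rfl⟩
      exact antitoneOn_bregmanDiv_mirrorFlow hc.le hconv hμ hd hflow hb self_mem_Ici ht ht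
  obtain ⟨z, hz, hLz⟩ := exists_mem_closure_eq_zero (by fun_prop) hL0 hbdd hsmall
  exact ⟨z, hz, by simpa [hc.ne', sub_eq_zero] using hLz⟩

lemma inner_gradient_eq_of_tendsto_mirrorFlow (hΨ : ContDiff ℝ 1 Ψ)
    (hflow : ∀ t ∈ Ici (0 : ℝ), HasDerivWithinAt (fun s => gradient Ψ (β s))
      (-gradient (fun b => c * ‖A b - y‖ ^ 2) (β t)) (Ici 0) t)
    {z : E} (hlim : Tendsto β atTop (𝓝 z)) {v : E} (hv : A v = 0) :
    ⟪gradient Ψ z, v⟫ = ⟪gradient Ψ (β 0), v⟫ :=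
  inner_eq_of_hasDerivWithinAt_of_tendsto hflow
    (fun t _ => by rw [inner_neg_left, inner_gradient_mul_norm_sub_sq, hv]; simp)
    ((hΨ.continuous_gradient.tendsto z).comp hlim)

theorem exists_tendsto_minimal_bregmanDiv_of_mirrorFlow [FiniteDimensional ℝ E] (hc : 0 < c)
    (hy : ∃ b, A b = y) (hΨ : ContDiff ℝ 1 Ψ) (hconv : StrongConvexOn univ μ Ψ) (hμ : 0 < μ)
    (hflow : ∀ t ∈ Ici (0 : ℝ), HasDerivWithinAt (fun s => gradient Ψ (β s))
      (-gradient (fun b => c * ‖A b - y‖ ^ 2) (β t)) (Ici 0) t) :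
    ∃ βinf, Tendsto β atTop (𝓝 βinf) ∧ A βinf = y ∧
      ∀ b, A b = y → bregmanDiv Ψ βinf (β 0) ≤ bregmanDiv Ψ b (β 0) := by
  have hd := hΨ.differentiable one_ne_zero
  obtain ⟨βinf, hmem, hβinf⟩ := exists_mem_closure_mirrorFlow hc hy hconv hμ hd hflow
  have hlim := hconv.tendsto_of_antitoneOn_bregmanDiv hμ hΨ
    (antitoneOn_bregmanDiv_mirrorFlow hc.le hconv hμ hd hflow hβinf) hmem
  refine ⟨βinf, hlim, hβinf, fun b hb => ?_⟩
  have horth : ⟪gradient Ψ (β 0) - gradient Ψ βinf, βinf - b⟫ = 0 := by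
    rw [inner_sub_left, inner_gradient_eq_of_tendsto_mirrorFlow hΨ hflow hlim
      (by rw [map_sub, hb, hβinf, sub_self]), sub_self]
  rw [bregmanDiv_three_point Ψ b βinf (β 0), horth]
  linarith [hconv.bregmanDiv_nonneg hμ.le hd b βinf]

end LeastSquares

theorem stmt_12_general {n d : ℕ} (hn : 0 < n) (X : Matrix (Fin n) (Fin d) ℝ) (y : Fin n → ℝ)
    (hexists : ∃ βs : Fin d → ℝ, X.mulVec βs = y)
    (L : EuclideanSpace ℝ (Fin d) → ℝ)
    (hLdef : ∀ b, L b = (1 / (4 * (n : ℝ))) * ∑ i, (X.mulVec b i - y i) ^ 2)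
    (Ψ : EuclideanSpace ℝ (Fin d) → ℝ) (hΨ : ContDiff ℝ 2 Ψ)
    (μ : ℝ) (hμ : 0 < μ)
    (hstrong : ConvexOn ℝ Set.univ (fun b => Ψ b - (μ / 2) * ‖b‖ ^ 2))
    (β : ℝ → EuclideanSpace ℝ (Fin d)) (β₀ : EuclideanSpace ℝ (Fin d))
    (hβ0 : β 0 = β₀)
    (hflow : ∀ t ∈ Set.Ici (0 : ℝ),
      HasDerivWithinAt (fun s => gradient Ψ (β s)) (-(gradient L (β t))) (Set.Ici 0) t) :
    ∃ βinf : EuclideanSpace ℝ (Fin d),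
      Filter.Tendsto β Filter.atTop (nhds βinf) ∧ X.mulVec βinf = y ∧
      ∀ b : EuclideanSpace ℝ (Fin d), X.mulVec b = y →
        Ψ βinf - Ψ β₀ - (inner ℝ (gradient Ψ β₀) (βinf - β₀) : ℝ) ≤
          Ψ b - Ψ β₀ - (inner ℝ (gradient Ψ β₀) (b - β₀) : ℝ) := by
  set A := (Matrix.toLpLin 2 2 X).toContinuousLinearMap
  have hA : ∀ b, A b = WithLp.toLp 2 y ↔ X.mulVec b = y := fun b =>
    (WithLp.toLp_injective 2).eq_iff
  have hL : L = fun b => 1 / (4 * (n : ℝ)) * ‖A b - WithLp.toLp 2 y‖ ^ 2 := by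
    ext b
    simp [hLdef, EuclideanSpace.norm_sq_eq, A, Matrix.toLpLin_apply]
  subst hL hβ0
  obtain ⟨βs, hβs⟩ := hexists
  obtain ⟨βinf, hlim, hAinf, hmin⟩ := exists_tendsto_minimal_bregmanDiv_of_mirrorFlow
    (by positivity) ⟨WithLp.toLp 2 βs, (hA _).2 hβs⟩ (hΨ.of_le one_le_two)
    (strongConvexOn_iff_convex.2 hstrong) hμ hflow
  exact ⟨βinf, hlim, (hA βinf).1 hAinf, fun b hb => hmin b ((hA b).2 hb)⟩

theorem stmt_12 {n d : ℕ} (hn : 0 < n) (X : Matrix (Fin n) (Fin d) ℝ) (y : Fin n → ℝ)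
    (hexists : ∃ βs : Fin d → ℝ, X.mulVec βs = y)
    (L : EuclideanSpace ℝ (Fin d) → ℝ)
    (hLdef : ∀ b, L b = (1 / (4 * (n : ℝ))) * ∑ i, (X.mulVec b i - y i) ^ 2)
    (Ψ : EuclideanSpace ℝ (Fin d) → ℝ) (hΨ : ContDiff ℝ 2 Ψ)
    (μ : ℝ) (hμ : 0 < μ)
    (hstrong : ConvexOn ℝ Set.univ (fun b => Ψ b - (μ / 2) * ‖b‖ ^ 2))
    (β : ℝ → EuclideanSpace ℝ (Fin d)) (β₀ : EuclideanSpace ℝ (Fin d))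
    (hβ0 : β 0 = β₀) (hcont : ContinuousOn β (Set.Ici 0))
    (hflow : ∀ t ∈ Set.Ici (0 : ℝ),
      HasDerivWithinAt (fun s => gradient Ψ (β s)) (-(gradient L (β t))) (Set.Ici 0) t) :
    ∃ βinf : EuclideanSpace ℝ (Fin d),
      Filter.Tendsto β Filter.atTop (nhds βinf) ∧ X.mulVec βinf = y ∧
      ∀ b : EuclideanSpace ℝ (Fin d), X.mulVec b = y →
        Ψ βinf - Ψ β₀ - (inner ℝ (gradient Ψ β₀) (βinf - β₀) : ℝ) ≤
          Ψ b - Ψ β₀ - (inner ℝ (gradient Ψ β₀) (b - β₀) : ℝ) :=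
  stmt_12_general hn X y hexists L hLdef Ψ hΨ μ hμ hstrong β β₀ hβ0 hflow
end

section
/- Let x₁,…,xₙ ∈ ℝ^d be the rows of X ∈ ℝ^{n×d}, y ∈ ℝⁿ, α ∈ (0,∞)^d, and let w₊, w₋ : [0,∞) → ℝ^d be differentiable with w₊(0) = w₋(0) = α, satisfying the gradient flow equations w₊'(t) = −[(1/n)·Xᵀ(Xβ(t) − y)] ⊙ w₊(t) and w₋'(t) = +[(1/n)·Xᵀ(Xβ(t) − y)] ⊙ w₋(t), where β(t) = w₊(t)² − w₋(t)² (coordinate-wise squares). Then for all t ≥ 0, the map t ↦ (1/4)·arsinh(β(t)/(2α²)) (coordinate-wise, i.e. the gradient ∇φ_α(β(t)) of the hyperbolic entropy) is differentiable with derivative −(1/(2n))·Xᵀ(Xβ(t) − y) = −∇L(β(t)), where L(β) = (1/(4n))·‖Xβ − y‖₂². -/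
/-! Along the flow `w₊' = -g ⊙ w₊`, `w₋' = g ⊙ w₋` the product `w₊ ⊙ w₋` is conserved, so it stays
equal to `α²`. Writing `β = w₊² - w₋²` with `w₊ w₋ = α²`, one gets
`√(1 + (β / 2α²)²) = (w₊² + w₋²) / 2α²`, while `β' = -2 g (w₊² + w₋²)`; the chain rule for `arsinh`
therefore makes the factor `w₊² + w₋²` cancel, leaving `(arsinh (β / 2α²))' = -2 g`. -/

open Real

lemma mul_eq_mul_of_hasDerivAt_neg_mul {u v g : ℝ → ℝ}
    (hu : ∀ t, HasDerivAt u (-(g t * u t)) t) (hv : ∀ t, HasDerivAt v (g t * v t) t)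
    (s t : ℝ) : u s * v s = u t * v t := by
  have hconst : ∀ r, HasDerivAt (fun r => u r * v r) 0 r := fun r =>
    ((hu r).mul (hv r)).congr_deriv (by ring)
  exact is_const_of_deriv_eq_zero (fun r => (hconst r).differentiableAt)
    (fun r => (hconst r).deriv) s t

lemma sqrt_one_add_sq_sub_sq_div {a b : ℝ} (hab : 0 < a * b) :
    √(1 + ((a ^ 2 - b ^ 2) / (2 * (a * b))) ^ 2) = (a ^ 2 + b ^ 2) / (2 * (a * b)) := by
  have hsq : 1 + ((a ^ 2 - b ^ 2) / (2 * (a * b))) ^ 2 = ((a ^ 2 + b ^ 2) / (2 * (a * b))) ^ 2 := by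
    have ha : a ≠ 0 := left_ne_zero_of_mul hab.ne'
    have hb : b ≠ 0 := right_ne_zero_of_mul hab.ne'
    field_simp
    ring
  rw [hsq, sqrt_sq (by positivity)]

lemma hasDerivAt_arsinh_sq_sub_sq_div {u v : ℝ → ℝ} {g c t : ℝ}
    (hu : HasDerivAt u (-(g * u t)) t) (hv : HasDerivAt v (g * v t) t)
    (huv : u t * v t = c) (hc : 0 < c) :
    HasDerivAt (fun s => arsinh ((u s ^ 2 - v s ^ 2) / (2 * c))) (-(2 * g)) t := by
  have hsq : HasDerivAt (fun s => (u s ^ 2 - v s ^ 2) / (2 * c))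
      (-(2 * g * (u t ^ 2 + v t ^ 2)) / (2 * c)) t :=
    (((hu.pow 2).sub (hv.pow 2)).congr_deriv (by push_cast; ring)).div_const _
  refine ((hasDerivAt_arsinh _).comp t hsq).congr_deriv ?_
  subst huv
  rw [sqrt_one_add_sq_sub_sq_div hc]
  have hpos : 0 < u t ^ 2 + v t ^ 2 := by nlinarith [sq_nonneg (u t - v t)]
  field_simp
  rw [mul_div_cancel_left₀ _ hc.ne']

theorem stmt_18_general {n d : ℕ} (X : Matrix (Fin n) (Fin d) ℝ) (y : Fin n → ℝ)
    (α : Fin d → ℝ) (hα : ∀ i, 0 < α i)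
    (wp wm : ℝ → Fin d → ℝ) (hw0 : wp 0 = α ∧ wm 0 = α)
    (β : ℝ → Fin d → ℝ) (hβ : ∀ t, β t = fun j => wp t j ^ 2 - wm t j ^ 2)
    (hflowp : ∀ t : ℝ, HasDerivAt wp
      (fun j => -(((1 / (n : ℝ)) * X.transpose.mulVec (X.mulVec (β t) - y) j) * wp t j)) t)
    (hflowm : ∀ t : ℝ, HasDerivAt wm
      (fun j => ((1 / (n : ℝ)) * X.transpose.mulVec (X.mulVec (β t) - y) j) * wm t j) t) :
    ∀ t : ℝ, 0 ≤ t →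
      HasDerivAt (fun s => fun j => (1 / 4) * Real.arsinh (β s j / (2 * α j ^ 2)))
        (fun j => -((1 / (2 * (n : ℝ))) * X.transpose.mulVec (X.mulVec (β t) - y) j)) t := by
  intro t _
  refine hasDerivAt_pi.mpr fun j => ?_
  have hwp := fun s => hasDerivAt_pi.mp (hflowp s) j
  have hwm := fun s => hasDerivAt_pi.mp (hflowm s) j
  have hprod : wp t j * wm t j = α j ^ 2 := by
    rw [mul_eq_mul_of_hasDerivAt_neg_mul hwp hwm t 0, hw0.1, hw0.2, sq]
  have key := (hasDerivAt_arsinh_sq_sub_sq_div (hwp t) (hwm t) hprod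
    (pow_pos (hα j) 2)).const_mul (1 / 4 : ℝ)
  exact (key.congr_deriv (by ring)).congr_of_eventuallyEq
    (Filter.Eventually.of_forall fun s => by simp only [hβ])

theorem stmt_18 {n d : ℕ} (hn : 0 < n) (X : Matrix (Fin n) (Fin d) ℝ) (y : Fin n → ℝ)
    (α : Fin d → ℝ) (hα : ∀ i, 0 < α i)
    (wp wm : ℝ → Fin d → ℝ) (hw0 : wp 0 = α ∧ wm 0 = α)
    (β : ℝ → Fin d → ℝ) (hβ : ∀ t, β t = fun j => wp t j ^ 2 - wm t j ^ 2)
    (hflowp : ∀ t : ℝ, HasDerivAt wp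
      (fun j => -(((1 / (n : ℝ)) * X.transpose.mulVec (X.mulVec (β t) - y) j) * wp t j)) t)
    (hflowm : ∀ t : ℝ, HasDerivAt wm
      (fun j => ((1 / (n : ℝ)) * X.transpose.mulVec (X.mulVec (β t) - y) j) * wm t j) t) :
    ∀ t : ℝ, 0 ≤ t →
      HasDerivAt (fun s => fun j => (1 / 4) * Real.arsinh (β s j / (2 * α j ^ 2)))
        (fun j => -((1 / (2 * (n : ℝ))) * X.transpose.mulVec (X.mulVec (β t) - y) j)) t :=
  stmt_18_general X y α hα wp wm hw0 β hβ hflowp hflowm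
end

section
/- Let x₁,…,xₙ ∈ ℝ^d be the rows of X ∈ ℝ^{n×d}, y ∈ ℝⁿ, α ∈ (0,∞)^d, and let w₊, w₋ : [0,∞) → ℝ^d be differentiable with w₊(0) = w₋(0) = α, satisfying w₊'(t) = −[(1/n)·Xᵀ(Xβ(t) − y)] ⊙ w₊(t) and w₋'(t) = +[(1/n)·Xᵀ(Xβ(t) − y)] ⊙ w₋(t), where β(t) = w₊(t)² − w₋(t)². Then for all t ≥ 0, with a(t) := (1/n)·Xᵀ ∫₀ᵗ (Xβ(s) − y) ds ∈ ℝ^d, one has the closed forms w₊(t) = α ⊙ exp(−a(t)), w₋(t) = α ⊙ exp(a(t)) (exp coordinate-wise), and β(t) = 2α² ⊙ sinh(−2a(t)) (sinh coordinate-wise). -/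
/-! Along the flow, the vector `a(t)` has derivative `(1/n)·Xᵀ(Xβ(t) − y)` by the fundamental
theorem of calculus, so each coordinate of `w₊` (resp. `w₋`) solves the scalar linear ODE
`f' = -a' f` (resp. `f' = a' f`). Hence `w₊ ⊙ exp(a)` and `w₋ ⊙ exp(-a)` are constant, equal to
their value `α` at `0`, and `β = w₊² − w₋²` is the difference of two exponentials. -/

open Real Matrix

theorem eq_mul_exp_sub_of_hasDerivAt {f g A : ℝ → ℝ} (hf : ∀ t, HasDerivAt f (g t * f t) t)
    (hA : ∀ t, HasDerivAt A (g t) t) (t : ℝ) : f t = f 0 * exp (A t - A 0) := by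
  have hconst : ∀ s, HasDerivAt (fun u => f u * exp (-A u)) 0 s := fun s =>
    ((hf s).mul (hA s).neg.exp).congr_deriv (by ring)
  have key : f t * exp (-A t) = f 0 * exp (-A 0) :=
    is_const_of_deriv_eq_zero (fun s => (hconst s).differentiableAt) (fun s => (hconst s).deriv)
      t 0
  calc f t = f t * exp (-A t) * exp (A t) := by rw [mul_assoc, ← exp_add]; simp
    _ = f 0 * exp (A t - A 0) := by rw [key, mul_assoc, ← exp_add]; ring_nf

theorem hasDerivAt_mulVec_integral {m n : Type*} [Fintype m] [Fintype n] (M : Matrix m n ℝ)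
    {F : ℝ → n → ℝ} (hF : Continuous F) (a t : ℝ) :
    HasDerivAt (fun u => M *ᵥ ∫ s in a..u, F s) (M *ᵥ F t) t :=
  M.mulVecLin.toContinuousLinearMap.hasFDerivAt.comp_hasDerivAt t
    (hF.integral_hasStrictDerivAt a t).hasDerivAt

theorem sq_mul_exp_neg_sub_sq_mul_exp (α a : ℝ) :
    (α * exp (-a)) ^ 2 - (α * exp a) ^ 2 = 2 * α ^ 2 * sinh (-(2 * a)) := by
  rw [sinh_eq, neg_neg, mul_pow, mul_pow, ← exp_nat_mul, ← exp_nat_mul]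
  ring_nf

theorem stmt_19_general {n d : ℕ} (X : Matrix (Fin n) (Fin d) ℝ) (y : Fin n → ℝ)
    (α : Fin d → ℝ)
    (wp wm : ℝ → Fin d → ℝ) (hw0 : wp 0 = α ∧ wm 0 = α)
    (β : ℝ → Fin d → ℝ) (hβ : ∀ t, β t = fun j => wp t j ^ 2 - wm t j ^ 2)
    (hflowp : ∀ t : ℝ, HasDerivAt wp
      (fun j => -(((1 / (n : ℝ)) * X.transpose.mulVec (X.mulVec (β t) - y) j) * wp t j)) t)
    (hflowm : ∀ t : ℝ, HasDerivAt wm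
      (fun j => ((1 / (n : ℝ)) * X.transpose.mulVec (X.mulVec (β t) - y) j) * wm t j) t)
    (a : ℝ → Fin d → ℝ)
    (ha : ∀ t, a t = fun j =>
      (1 / (n : ℝ)) * X.transpose.mulVec (∫ s in (0 : ℝ)..t, (X.mulVec (β s) - y)) j) :
    ∀ t : ℝ, 0 ≤ t → ∀ j : Fin d,
      wp t j = α j * Real.exp (-(a t j)) ∧
      wm t j = α j * Real.exp (a t j) ∧
      β t j = 2 * α j ^ 2 * Real.sinh (-(2 * a t j)) := by
  intro t _ j
  obtain ⟨hwp0, hwm0⟩ := hw0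
  have hβc : Continuous β := by
    rw [show β = _ from funext hβ]
    have hwp := continuous_iff_continuousAt.2 fun t => (hflowp t).continuousAt
    have hwm := continuous_iff_continuousAt.2 fun t => (hflowm t).continuousAt
    fun_prop
  have hda : ∀ s, HasDerivAt a ((1 / (n : ℝ)) • Xᵀ *ᵥ (X *ᵥ β s - y)) s := fun s => by
    rw [show a = fun t => (1 / (n : ℝ)) • Xᵀ *ᵥ ∫ s in (0 : ℝ)..t, (X *ᵥ β s - y) from
      funext fun t => by rw [ha]; rfl]
    exact (hasDerivAt_mulVec_integral Xᵀ
      (F := fun s => X *ᵥ β s - y) (by fun_prop) 0 s).const_smul (1 / (n : ℝ))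
  have hdaj : ∀ s, HasDerivAt (fun u => a u j)
      ((1 / (n : ℝ)) * (Xᵀ *ᵥ (X *ᵥ β s - y)) j) s := fun s => hasDerivAt_pi.1 (hda s) j
  have ha0 : a 0 j = 0 := by simp [ha]
  have hwpt : wp t j = α j * exp (-a t j) := by
    simpa [ha0, hwp0] using eq_mul_exp_sub_of_hasDerivAt (f := fun u => wp u j)
      (fun s => (hasDerivAt_pi.1 (hflowp s) j).congr_deriv (neg_mul _ _).symm)
      (fun s => (hdaj s).neg) t
  have hwmt : wm t j = α j * exp (a t j) := by
    simpa [ha0, hwm0] using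
      eq_mul_exp_sub_of_hasDerivAt (fun s => hasDerivAt_pi.1 (hflowm s) j) hdaj t
  refine ⟨hwpt, hwmt, ?_⟩
  rw [hβ]
  dsimp only
  rw [hwpt, hwmt]
  exact sq_mul_exp_neg_sub_sq_mul_exp _ _

theorem stmt_19 {n d : ℕ} (hn : 0 < n) (X : Matrix (Fin n) (Fin d) ℝ) (y : Fin n → ℝ)
    (α : Fin d → ℝ) (hα : ∀ i, 0 < α i)
    (wp wm : ℝ → Fin d → ℝ) (hw0 : wp 0 = α ∧ wm 0 = α)
    (β : ℝ → Fin d → ℝ) (hβ : ∀ t, β t = fun j => wp t j ^ 2 - wm t j ^ 2)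
    (hflowp : ∀ t : ℝ, HasDerivAt wp
      (fun j => -(((1 / (n : ℝ)) * X.transpose.mulVec (X.mulVec (β t) - y) j) * wp t j)) t)
    (hflowm : ∀ t : ℝ, HasDerivAt wm
      (fun j => ((1 / (n : ℝ)) * X.transpose.mulVec (X.mulVec (β t) - y) j) * wm t j) t)
    (a : ℝ → Fin d → ℝ)
    (ha : ∀ t, a t = fun j =>
      (1 / (n : ℝ)) * X.transpose.mulVec (∫ s in (0 : ℝ)..t, (X.mulVec (β s) - y)) j) :
    ∀ t : ℝ, 0 ≤ t → ∀ j : Fin d,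
      wp t j = α j * Real.exp (-(a t j)) ∧
      wm t j = α j * Real.exp (a t j) ∧
      β t j = 2 * α j ^ 2 * Real.sinh (-(2 * a t j)) :=
  stmt_19_general X y α wp wm hw0 β hβ hflowp hflowm a ha
end
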